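/- arXiv:1507.07622 — 6 statements merged into one kernel-verified Lean document; each statement's English description precedes it below -/
import Mathlib

section
/- Equivalence classes of the ending-position relation are convex under the suffix order: if x, y, z are nonempty strings such that x is a suffix of z, z is a suffix of y, and Epos_T(x) = Epos_T(y) is nonempty, then Epos_T(z) = Epos_T(x). -/
/-- The set of ending positions of occurrences of the nonempty string `x`
in the collection `T = (T_1, …, T_K)`. -/
def Epos {α : Type*} {K : ℕ} (T : Fin K → List α) (x : List α) : Set (Fin K × ℕ) :=
  {p | x.length ≤ p.2 ∧ p.2 ≤ (T p.1).length ∧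
       ((T p.1).take p.2).drop (p.2 - x.length) = x}

lemma drop_sub_of_suffix {α : Type*} {s x : List α} (hx : x <:+ s) :
    s.drop (s.length - x.length) = x := by
  obtain ⟨t, rfl⟩ := hx
  simp

lemma epos_anti {α : Type*} {K : ℕ} (T : Fin K → List α) {x z : List α}
    (hxz : x <:+ z) : Epos T z ⊆ Epos T x := by
  rintro ⟨k, n⟩ ⟨h1, h2, h3⟩
  have hlen : x.length ≤ z.length := hxz.length_le
  refine ⟨hlen.trans h1, h2, ?_⟩
  have htake : ((T k).take n).length = n := by
    simp [List.length_take, Nat.min_eq_left h2]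
  have hzs : z <:+ (T k).take n := h3 ▸ List.drop_suffix _ _
  have := drop_sub_of_suffix (hxz.trans hzs)
  rwa [htake] at this

/-- ending-position classes are convex under the suffix order:
if `x <:+ z <:+ y` and `Epos_T(x) = Epos_T(y)` is nonempty then
`Epos_T(z) = Epos_T(x)`. -/
theorem epos_convex {α : Type*} {K : ℕ} (T : Fin K → List α)
    (x y z : List α) (hx : x ≠ []) (hy : y ≠ []) (hz : z ≠ [])
    (hxz : x <:+ z) (hzy : z <:+ y)
    (heq : Epos T x = Epos T y) (hne : (Epos T x).Nonempty) :
    Epos T z = Epos T x := by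
  apply Set.Subset.antisymm (epos_anti T hxz)
  rw [heq]
  exact epos_anti T hzy
end

section
/- Characterization of longest class representatives (the nodes long([y]_T) of the DAWG): a nonempty substring y of T satisfies Epos_T(z) = Epos_T(y) → |z| ≤ |y| for every nonempty string z (i.e., y is the longest member of its ending-position equivalence class) if and only if y is a prefix of some text T_k or y is left-branching in T. -/
/-- `x` is a substring (contiguous factor) of some text of the collection `T`. -/
def IsSubstringOf {α : Type*} {K : ℕ} (T : Fin K → List α) (x : List α) : Prop :=
  ∃ k, x <:+: T k

/-- `x` is left-branching in `T`: two distinct characters can precede `x`. -/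
def LeftBranching {α : Type*} {K : ℕ} (T : Fin K → List α) (x : List α) : Prop :=
  ∃ a b : α, a ≠ b ∧ IsSubstringOf T (a :: x) ∧ IsSubstringOf T (b :: x)

lemma mem_epos_iff {α : Type*} {K : ℕ} (T : Fin K → List α) (x : List α) (k : Fin K) (j : ℕ) :
    (k, j) ∈ Epos T x ↔ ∃ s t, T k = s ++ x ++ t ∧ j = s.length + x.length := by
  simp only [Epos, Set.mem_setOf_eq]
  constructor
  · rintro ⟨h1, h2, h3⟩
    refine ⟨(T k).take (j - x.length), (T k).drop j, ?_, ?_⟩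
    · conv_lhs => rw [← List.take_append_drop j (T k)]
      congr 1
      conv_lhs => rw [← List.take_append_drop (j - x.length) ((T k).take j)]
      rw [h3, List.take_take, min_eq_left (by omega)]
    · rw [List.length_take]; omega
  · rintro ⟨s, t, h1, h2⟩
    have hl : (T k).length = s.length + x.length + t.length := by simp [h1]; omega
    refine ⟨by omega, by omega, ?_⟩
    have hj : j - x.length = s.length := by omega
    rw [h1, hj, h2]
    rw [List.take_left' (by simp), List.drop_left' rfl]

lemma substring_of_mem_epos {α : Type*} {K : ℕ} {T : Fin K → List α} {x : List α}
    {k : Fin K} {j : ℕ} (h : (k, j) ∈ Epos T x) : IsSubstringOf T x := by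
  rw [mem_epos_iff] at h
  obtain ⟨s, t, h1, _⟩ := h
  exact ⟨k, s, t, h1.symm⟩

lemma epos_cons_subset {α : Type*} {K : ℕ} {T : Fin K → List α} {x : List α} {c : α}
    {k : Fin K} {j : ℕ} (h : (k, j) ∈ Epos T (c :: x)) : (k, j) ∈ Epos T x := by
  rw [mem_epos_iff] at h ⊢
  obtain ⟨s, t, h1, h2⟩ := h
  refine ⟨s ++ [c], t, by simp [h1], by simp at h2 ⊢; omega⟩

lemma suffix_of_mem_epos {α : Type*} {K : ℕ} {T : Fin K → List α} {x z : List α}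
    {k : Fin K} {j : ℕ} (hlen : x.length ≤ z.length)
    (hx : (k, j) ∈ Epos T x) (hz : (k, j) ∈ Epos T z) : x <:+ z := by
  simp only [Epos, Set.mem_setOf_eq] at hx hz
  obtain ⟨hx1, hx2, hx3⟩ := hx
  obtain ⟨hz1, hz2, hz3⟩ := hz
  have h : j - x.length = (j - z.length) + (z.length - x.length) := by omega
  rw [← hx3, h, ← List.drop_drop, hz3]
  exact List.drop_suffix _ _

/-- a nonempty substring `y` of `T` is the longest member of its
ending-position equivalence class iff `y` is a prefix of some text or `y` is
left-branching in `T`. -/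
theorem longest_class_member_iff {α : Type*} {K : ℕ} (T : Fin K → List α)
    (y : List α) (hy : y ≠ []) (hsub : IsSubstringOf T y) :
    (∀ z : List α, z ≠ [] → Epos T z = Epos T y → z.length ≤ y.length) ↔
      ((∃ k, y <+: T k) ∨ LeftBranching T y) := by
  constructor
  · intro H
    by_contra hcon
    push_neg at hcon
    obtain ⟨hpre, hbr⟩ := hcon
    obtain ⟨k, s, t, hk⟩ := hsub
    have hmem : (k, s.length + y.length) ∈ Epos T y :=
      (mem_epos_iff T y k _).mpr ⟨s, t, hk.symm, rfl⟩
    have key : ∀ (k' : Fin K) (j' : ℕ), (k', j') ∈ Epos T y →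
        ∃ c, (k', j') ∈ Epos T (c :: y) := by
      intro k' j' h'
      rw [mem_epos_iff] at h'
      obtain ⟨s', t', h1, h2⟩ := h'
      rcases s'.eq_nil_or_concat with rfl | ⟨s'', c, rfl⟩
      · exact absurd ⟨t', by simp [h1]⟩ (hpre k')
      · refine ⟨c, (mem_epos_iff T _ k' j').mpr ⟨s'', t', by rw [h1]; simp, ?_⟩⟩
        simp at h2 ⊢; omega
    obtain ⟨c, hc⟩ := key k _ hmem
    have heq : Epos T (c :: y) = Epos T y := by
      ext ⟨k', j'⟩
      constructor
      · exact epos_cons_subset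
      · intro h'
        obtain ⟨c', hc'⟩ := key _ _ h'
        rcases eq_or_ne c' c with rfl | hne
        · exact hc'
        · exact absurd ⟨c', c, hne, substring_of_mem_epos hc', substring_of_mem_epos hc⟩ hbr
    have := H (c :: y) (by simp) heq
    simp at this
  · rintro (⟨k, hpre⟩ | ⟨a, b, hab, ha, hb⟩) z hz hEq
    · obtain ⟨t, ht⟩ := hpre
      have hmem : (k, y.length) ∈ Epos T y :=
        (mem_epos_iff T y k _).mpr ⟨[], t, by simp [← ht], by simp⟩
      rw [← hEq] at hmem
      exact hmem.1
    · by_contra hlen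
      push_neg at hlen
      obtain ⟨k1, s1, t1, h1⟩ := ha
      obtain ⟨k2, s2, t2, h2⟩ := hb
      have ma : (k1, s1.length + (a :: y).length) ∈ Epos T (a :: y) :=
        (mem_epos_iff T _ k1 _).mpr ⟨s1, t1, h1.symm, rfl⟩
      have mb : (k2, s2.length + (b :: y).length) ∈ Epos T (b :: y) :=
        (mem_epos_iff T _ k2 _).mpr ⟨s2, t2, h2.symm, rfl⟩
      have maz : (k1, s1.length + (a :: y).length) ∈ Epos T z := by
        rw [hEq]; exact epos_cons_subset ma
      have mbz : (k2, s2.length + (b :: y).length) ∈ Epos T z := by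
        rw [hEq]; exact epos_cons_subset mb
      have sa : (a :: y) <:+ z := suffix_of_mem_epos (by simp; omega) ma maz
      have sb : (b :: y) <:+ z := suffix_of_mem_epos (by simp; omega) mb mbz
      obtain ⟨u1, e1⟩ := sa
      obtain ⟨u2, e2⟩ := sb
      have : u1 = u2 ∧ a :: y = b :: y := by
        apply List.append_inj (e1.trans e2.symm)
        have l1 := congrArg List.length e1
        have l2 := congrArg List.length e2
        simp at l1 l2
        omega
      have h2 := this.2
      injection h2 with hab' _
      exact hab hab'
end

section
/- (Correctness of the DAWG node split.) Let T' = (T_1, …, T_K) be a collection, a ∈ Σ, 1 ≤ k ≤ K, and let T be the collection obtained from T' by replacing T_k with T_k·[a]. If x and y are nonempty strings with Epos_{T'}(x) = Epos_{T'}(y) nonempty, y is a suffix of T_k·[a], and x is not a suffix of T_k·[a], then Epos_T(x) is a strict subset of Epos_T(y) (so x and y lie in different ending-position classes of T, i.e., the old DAWG node containing both must be split). -/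
/-- correctness of the DAWG node split: after appending `a` to
the `k`-th text, two previously Epos-equivalent strings `x`, `y` such that `y`
is a suffix of the extended text but `x` is not end up with
`Epos_T(x) ⊊ Epos_T(y)`. -/
theorem epos_split {α : Type*} {K : ℕ} (T' : Fin K → List α) (a : α) (k : Fin K)
    (T : Fin K → List α) (hT : T = Function.update T' k (T' k ++ [a]))
    (x y : List α) (hx : x ≠ []) (hy : y ≠ [])
    (heq : Epos T' x = Epos T' y) (hne : (Epos T' x).Nonempty)
    (hysuf : y <:+ T' k ++ [a]) (hxsuf : ¬ x <:+ T' k ++ [a]) :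
    Epos T x ⊂ Epos T y := by
  subst hT
  set Tk := T' k ++ [a] with hTk
  have hlen : Tk.length = (T' k).length + 1 := by simp [hTk]
  have key : ∀ z : List α, ∀ i : Fin K, ∀ j : ℕ,
      (i, j) ∈ Epos (Function.update T' k Tk) z ↔
      ((i, j) ∈ Epos T' z ∨ ((i, j) = (k, (T' k).length + 1) ∧ z <:+ Tk)) := by
    intro z i j
    simp only [Epos, Set.mem_setOf_eq, Prod.mk.injEq]
    constructor
    · rintro ⟨h1, h2, h3⟩
      by_cases hk : i = k
      · subst hk
        rw [Function.update_self] at h2 h3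
        rw [hlen] at h2
        rcases lt_or_eq_of_le h2 with h | h
        · left
          have hj : j ≤ (T' i).length := by omega
          refine ⟨h1, hj, ?_⟩
          rwa [hTk, List.take_append_of_le_length hj] at h3
        · right
          have hj : j = Tk.length := by omega
          refine ⟨⟨rfl, by omega⟩, ?_⟩
          rw [hj, List.take_length] at h3
          rw [← h3]
          exact List.drop_suffix _ _
      · left
        rw [Function.update_of_ne hk] at h2 h3
        exact ⟨h1, h2, h3⟩
    · rintro (⟨h1, h2, h3⟩ | ⟨⟨hik, hj⟩, hsuf⟩)
      · by_cases hk : i = k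
        · subst hk
          refine ⟨h1, ?_, ?_⟩
          · rw [Function.update_self]; omega
          · rw [Function.update_self, hTk, List.take_append_of_le_length h2]
            exact h3
        · rw [Function.update_of_ne hk]
          exact ⟨h1, h2, h3⟩
      · subst hik; subst hj
        have hzl : z.length ≤ Tk.length := hsuf.length_le
        refine ⟨by omega, ?_, ?_⟩
        · rw [Function.update_self]; omega
        · rw [Function.update_self, ← hlen, List.take_length,
            ← List.suffix_iff_eq_drop.mp hsuf]
  have hw : ((k, (T' k).length + 1) : Fin K × ℕ) ∈ Epos (Function.update T' k Tk) y :=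
    (key y _ _).mpr (Or.inr ⟨rfl, hysuf⟩)
  have hwx : ((k, (T' k).length + 1) : Fin K × ℕ) ∉ Epos (Function.update T' k Tk) x := by
    intro h
    rcases (key x _ _).mp h with ⟨_, h2, _⟩ | ⟨_, hsuf⟩
    · simp at h2
    · exact hxsuf hsuf
  constructor
  · rintro ⟨i, j⟩ hp
    rcases (key x i j).mp hp with h | ⟨_, hsuf⟩
    · exact (key y i j).mpr (Or.inl (heq ▸ h))
    · exact absurd hsuf hxsuf
  · intro hsub
    exact hwx (hsub hw)
end

section
/- The longest repeating suffix grows by at most one character per appended character: let T' = (T_1, …, T_K) be a collection, a ∈ Σ, 1 ≤ k ≤ K, and let T be the collection obtained from T' by replacing T_k with T_k·[a]. If w is a nonempty string such that w·[a] is a suffix of T_k·[a] and |Epos_T(w·[a])| ≥ 2, then w is a suffix of T_k and |Epos_{T'}(w)| ≥ 2. Consequently, the length of the longest suffix of T_k·[a] occurring at least twice in T is at most one more than the length of the longest suffix of T_k occurring at least twice in T' (i.e., |lrs_T(T_k·[a])| ≤ |lrs_{T'}(T_k)| + 1). -/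
/-- The length of `lrs_T(S)`, the longest suffix of `S` occurring at least
twice in `T` (the empty suffix always counts as repeating). -/
noncomputable def lrsLen {α : Type*} {K : ℕ} (T : Fin K → List α) (S : List α) : ℕ :=
  sSup {n : ℕ | ∃ s : List α, s <:+ S ∧ s.length = n ∧ (s = [] ∨ 2 ≤ (Epos T s).ncard)}

/-!
An occurrence of `w ++ [a]` ending at position `j` of a text of `T` contains an occurrence of
`w` ending at `j - 1`, and that occurrence is already present in `T'` as long as dropping the
last character of each text of `T` leaves a prefix of the corresponding text of `T'`. The map
`(i, j) ↦ (i, j - 1)` is injective on such positions, so every repeating `w ++ [a]` yields a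
repeating `w`. As every nonempty suffix of `S ++ [a]` has the form `w ++ [a]` with `w` a suffix
of `S`, the bound on `lrsLen` follows.
-/

namespace List

variable {α : Type*}

theorem IsPrefix.take_eq_take {l₁ l₂ : List α} (h : l₁ <+: l₂) {n : ℕ} (hn : n ≤ l₁.length) :
    l₁.take n = l₂.take n :=
  (h.take n).eq_of_length (by simp [hn, hn.trans h.length_le])

theorem IsSuffix.of_append_singleton_dropLast {x l : List α} {a : α} (h : x ++ [a] <:+ l) :
    x <:+ l.dropLast := by
  obtain ⟨t, rfl⟩ := h
  exact ⟨t, by rw [← append_assoc, dropLast_concat]⟩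

end List

section Epos

variable {α : Type*} {K : ℕ}

theorem finite_epos (T : Fin K → List α) (x : List α) : (Epos T x).Finite :=
  (Set.finite_iUnion fun i => (Set.finite_singleton i).prod (Set.finite_Iic (T i).length)).subset
    fun p hp => Set.mem_iUnion.2 ⟨p.1, rfl, hp.2.1⟩

theorem mem_epos_iff_s8 {T : Fin K → List α} {x : List α} {p : Fin K × ℕ} :
    p ∈ Epos T x ↔ p.2 ≤ (T p.1).length ∧ x <:+ (T p.1).take p.2 := by
  constructor
  · rintro ⟨-, hj, hx⟩
    exact ⟨hj, hx ▸ List.drop_suffix _ _⟩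
  · rintro ⟨hj, hx⟩
    have hlen : ((T p.1).take p.2).length = p.2 := List.length_take_of_le hj
    refine ⟨hlen ▸ hx.length_le, hj, ?_⟩
    rw [List.suffix_iff_eq_drop, hlen] at hx
    exact hx.symm

variable {T T' : Fin K → List α}

theorem mem_epos_of_mem_epos_append_singleton (hT : ∀ i, (T i).dropLast <+: T' i)
    {x : List α} {a : α} {p : Fin K × ℕ} (hp : p ∈ Epos T (x ++ [a])) :
    (p.1, p.2 - 1) ∈ Epos T' x := by
  rw [mem_epos_iff_s8] at hp ⊢
  obtain ⟨hj, hsuf⟩ := hp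
  have hj' : p.2 - 1 ≤ (T p.1).dropLast.length := by
    rw [List.length_dropLast]
    omega
  have htake : ((T p.1).take p.2).dropLast = (T' p.1).take (p.2 - 1) := by
    rw [List.dropLast_take_eq_take_dropLast, (hT p.1).take_eq_take hj']
  exact ⟨hj'.trans (hT p.1).length_le, htake ▸ hsuf.of_append_singleton_dropLast⟩

theorem ncard_epos_append_singleton_le (hT : ∀ i, (T i).dropLast <+: T' i)
    (x : List α) (a : α) : (Epos T (x ++ [a])).ncard ≤ (Epos T' x).ncard := by
  refine Set.ncard_le_ncard_of_injOn (fun p => (p.1, p.2 - 1))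
    (fun p hp => mem_epos_of_mem_epos_append_singleton hT hp) ?_ (finite_epos T' x)
  intro p hp q hq hpq
  have hp1 : (x ++ [a]).length ≤ p.2 := hp.1
  have hq1 : (x ++ [a]).length ≤ q.2 := hq.1
  simp only [List.length_append, List.length_singleton, Prod.mk.injEq] at hp1 hq1 hpq
  exact Prod.ext hpq.1 (by omega)

end Epos

section lrsLen

variable {α : Type*} {K : ℕ}

theorem le_lrsLen {T : Fin K → List α} {S s : List α} (hs : s <:+ S)
    (hrep : s = [] ∨ 2 ≤ (Epos T s).ncard) : s.length ≤ lrsLen T S :=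
  le_csSup ⟨S.length, by rintro _ ⟨s', hs', rfl, -⟩; exact hs'.length_le⟩ ⟨s, hs, rfl, hrep⟩

theorem lrsLen_le {T : Fin K → List α} {S : List α} {n : ℕ}
    (h : ∀ s, s <:+ S → 2 ≤ (Epos T s).ncard → s.length ≤ n) : lrsLen T S ≤ n := by
  refine csSup_le ⟨0, [], List.nil_suffix, rfl, Or.inl rfl⟩ ?_
  rintro _ ⟨s, hs, rfl, rfl | hrep⟩
  · exact Nat.zero_le n
  · exact h s hs hrep

theorem lrsLen_append_singleton_le {T T' : Fin K → List α} (hT : ∀ i, (T i).dropLast <+: T' i)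
    (S : List α) (a : α) : lrsLen T (S ++ [a]) ≤ lrsLen T' S + 1 :=
  lrsLen_le fun s hs hrep => by
    rcases List.suffix_concat_iff.1 hs with rfl | ⟨w, rfl, hw⟩
    · simp
    · simpa using le_lrsLen hw (Or.inr (hrep.trans (ncard_epos_append_singleton_le hT w a)))

end lrsLen

/-- the longest repeating suffix grows by at most one character
per appended character. -/
theorem lrs_grows_by_at_most_one {α : Type*} {K : ℕ}
    (T' : Fin K → List α) (a : α) (k : Fin K)
    (T : Fin K → List α) (hT : T = Function.update T' k (T' k ++ [a])) :
    (∀ w : List α, w ≠ [] → w ++ [a] <:+ T' k ++ [a] →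
        2 ≤ (Epos T (w ++ [a])).ncard →
          w <:+ T' k ∧ 2 ≤ (Epos T' w).ncard) ∧
    lrsLen T (T' k ++ [a]) ≤ lrsLen T' (T' k) + 1 := by
  have hext : ∀ i, (T i).dropLast <+: T' i := by
    intro i
    rcases eq_or_ne i k with rfl | hik
    · simp [hT]
    · simpa [hT, Function.update_of_ne hik] using (T' i).dropLast_prefix
  exact ⟨fun w _ hsuf hrep => ⟨List.suffix_append_self_iff.1 hsuf,
      hrep.trans (ncard_epos_append_singleton_le hext w a)⟩,
    lrsLen_append_singleton_le hext (T' k) a⟩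
end

section
/- Linear bound on the number of suffix tree internal nodes: for a collection T = (T_1, …, T_K) of texts of total length N = |T_1| + ⋯ + |T_K| ≥ 1, the number of distinct strings (possibly including the empty string) that are right-branching in T is at most N − 1. -/
/-- `x` is right-branching in `T`: two distinct characters can follow `x`. -/
def RightBranching {α : Type*} {K : ℕ} (T : Fin K → List α) (x : List α) : Prop :=
  ∃ a b : α, a ≠ b ∧ IsSubstringOf T (x ++ [a]) ∧ IsSubstringOf T (x ++ [b])

/-!
Every substring `x ++ [a]` is a prefix of a nonempty suffix of some text, so the right-branching
strings are branching nodes of the trie of the set `S` of nonempty suffixes, and `|S| ≤ N`.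
A trie with `n ≥ 1` leaves has fewer than `n` branching nodes: adding a string `s` to `S`
creates at most one new branching node, since a new node is a prefix of `s` and the
shortest such node already branches in `S` as soon as there is a longer one.
-/

namespace List

variable {α : Type*}

theorem eq_of_append_singleton_prefix {x s : List α} {a b : α} (ha : x ++ [a] <+: s)
    (hb : x ++ [b] <+: s) : a = b := by
  have hab : x ++ [a] = x ++ [b] := by
    rw [prefix_iff_eq_take.1 ha, prefix_iff_eq_take.1 hb]
    simp
  simpa using hab

theorem IsPrefix.exists_append_singleton_prefix {x s : List α} (h : x <+: s) (hne : x ≠ s) :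
    ∃ c, x ++ [c] <+: s := by
  obtain ⟨_ | ⟨c, t⟩, rfl⟩ := h
  · simp at hne
  · exact ⟨c, t, by simp⟩

end List

section BranchingPrefixes

variable {α : Type*}

def branchingPrefixes (S : Finset (List α)) : Set (List α) :=
  {x | ∃ a b, a ≠ b ∧ (∃ s ∈ S, x ++ [a] <+: s) ∧ ∃ t ∈ S, x ++ [b] <+: t}

theorem finite_branchingPrefixes [DecidableEq α] (S : Finset (List α)) :
    (branchingPrefixes S).Finite := by
  refine (S.biUnion fun s => s.inits.toFinset).finite_toSet.subset ?_
  rintro x ⟨a, -, -, ⟨s, hs, hxs⟩, -⟩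
  simpa using ⟨s, hs, (List.prefix_append x [a]).trans hxs⟩

theorem branchingPrefixes_singleton (s : List α) : branchingPrefixes {s} = ∅ := by
  refine Set.eq_empty_of_forall_notMem ?_
  rintro x ⟨a, b, hab, ⟨u, hu, ha⟩, ⟨v, hv, hb⟩⟩
  rw [Finset.mem_singleton] at hu hv
  subst hu hv
  exact hab (List.eq_of_append_singleton_prefix ha hb)

theorem exists_of_mem_branchingPrefixes_cons {S : Finset (List α)} {s x : List α} (hs : s ∉ S)
    (hx : x ∈ branchingPrefixes (S.cons s hs)) (hxS : x ∉ branchingPrefixes S) :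
    ∃ a b, a ≠ b ∧ x ++ [a] <+: s ∧ ∃ t ∈ S, x ++ [b] <+: t := by
  obtain ⟨a, b, hab, ⟨u, hu, hau⟩, ⟨v, hv, hbv⟩⟩ := hx
  rw [Finset.mem_cons] at hu hv
  rcases hu with rfl | hu <;> rcases hv with rfl | hv
  · exact absurd (List.eq_of_append_singleton_prefix hau hbv) hab
  · exact ⟨a, b, hab, hau, v, hv, hbv⟩
  · exact ⟨b, a, hab.symm, hbv, u, hu, hau⟩
  · exact absurd ⟨a, b, hab, ⟨u, hu, hau⟩, ⟨v, hv, hbv⟩⟩ hxS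

theorem subsingleton_branchingPrefixes_cons_diff {S : Finset (List α)} {s : List α}
    (hs : s ∉ S) : (branchingPrefixes (S.cons s hs) \ branchingPrefixes S).Subsingleton := by
  suffices key : ∀ x ∈ branchingPrefixes (S.cons s hs) \ branchingPrefixes S,
      ∀ y ∈ branchingPrefixes (S.cons s hs) \ branchingPrefixes S, x <+: y → x = y by
    intro x hx y hy
    obtain ⟨a, -, -, hxs, -⟩ := exists_of_mem_branchingPrefixes_cons hs hx.1 hx.2
    obtain ⟨a', -, -, hys, -⟩ := exists_of_mem_branchingPrefixes_cons hs hy.1 hy.2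
    rcases List.prefix_or_prefix_of_prefix ((List.prefix_append x [a]).trans hxs)
      ((List.prefix_append y [a']).trans hys) with hxy | hyx
    · exact key x hx y hy hxy
    · exact (key y hy x hx hyx).symm
  intro x hx y hy hxy
  by_contra hne
  obtain ⟨a, b, hab, hxs, t, ht, hxt⟩ := exists_of_mem_branchingPrefixes_cons hs hx.1 hx.2
  obtain ⟨a', b', -, hys, t', ht', hyt'⟩ := exists_of_mem_branchingPrefixes_cons hs hy.1 hy.2
  obtain ⟨c, hcy⟩ := hxy.exists_append_singleton_prefix hne
  obtain rfl : c = a :=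
    List.eq_of_append_singleton_prefix (hcy.trans ((List.prefix_append y [a']).trans hys)) hxs
  exact hx.2 ⟨c, b, hab, ⟨t', ht', hcy.trans ((List.prefix_append y [b']).trans hyt')⟩, t, ht, hxt⟩

theorem ncard_branchingPrefixes_cons_le [DecidableEq α] {S : Finset (List α)} {s : List α}
    (hs : s ∉ S) : (branchingPrefixes (S.cons s hs)).ncard ≤ (branchingPrefixes S).ncard + 1 := by
  have hdiff := subsingleton_branchingPrefixes_cons_diff hs
  calc (branchingPrefixes (S.cons s hs)).ncard
      ≤ (branchingPrefixes (S.cons s hs) \ branchingPrefixes S).ncard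
          + (branchingPrefixes S).ncard :=
        Set.ncard_le_ncard_sdiff_add_ncard _ _ (finite_branchingPrefixes S)
    _ ≤ 1 + (branchingPrefixes S).ncard := by
        gcongr
        exact (Set.ncard_le_one hdiff.finite).2 hdiff
    _ = (branchingPrefixes S).ncard + 1 := add_comm _ _

theorem ncard_branchingPrefixes_lt_card [DecidableEq α] {S : Finset (List α)} (hS : S.Nonempty) :
    (branchingPrefixes S).ncard < S.card := by
  induction hS using Finset.Nonempty.cons_induction with
  | singleton s => simp [branchingPrefixes_singleton]
  | cons s S hs _ ih =>
    rw [Finset.card_cons]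
    exact (ncard_branchingPrefixes_cons_le hs).trans_lt (Nat.succ_lt_succ ih)

theorem ncard_branchingPrefixes_le [DecidableEq α] (S : Finset (List α)) :
    (branchingPrefixes S).ncard ≤ S.card - 1 := by
  rcases S.eq_empty_or_nonempty with rfl | hS
  · simp [branchingPrefixes]
  · have := ncard_branchingPrefixes_lt_card hS
    omega

end BranchingPrefixes

section NonemptySuffixes

variable {α : Type*} [DecidableEq α] {K : ℕ}

def nonemptySuffixes (T : Fin K → List α) : Finset (List α) :=
  Finset.univ.biUnion fun k => (T k).tails.toFinset.erase []

theorem card_nonemptySuffixes_le (T : Fin K → List α) :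
    (nonemptySuffixes T).card ≤ ∑ k, (T k).length := by
  refine Finset.card_biUnion_le.trans (Finset.sum_le_sum fun k _ => ?_)
  have hcard : (T k).tails.toFinset.card ≤ (T k).length + 1 := by
    simpa using (T k).tails.toFinset_card_le
  have hnil : [] ∈ (T k).tails.toFinset := by simp
  rw [Finset.card_erase_of_mem hnil]
  omega

theorem exists_mem_nonemptySuffixes_prefix {T : Fin K → List α} {y : List α} (hy : y ≠ [])
    (h : IsSubstringOf T y) : ∃ s ∈ nonemptySuffixes T, y <+: s := by
  obtain ⟨k, hk⟩ := h
  obtain ⟨s, hys, hs⟩ := List.infix_iff_prefix_suffix.1 hk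
  refine ⟨s, ?_, hys⟩
  have hsne : s ≠ [] := by
    rintro rfl
    exact hy (List.prefix_nil.1 hys)
  simpa [nonemptySuffixes, List.mem_tails] using ⟨hsne, k, hs⟩

theorem setOf_rightBranching_subset (T : Fin K → List α) :
    {x | RightBranching T x} ⊆ branchingPrefixes (nonemptySuffixes T) := by
  rintro x ⟨a, b, hab, ha, hb⟩
  exact ⟨a, b, hab, exists_mem_nonemptySuffixes_prefix (by simp) ha,
    exists_mem_nonemptySuffixes_prefix (by simp) hb⟩

end NonemptySuffixes

theorem card_rightBranching_le_general {α : Type*} {K : ℕ} (T : Fin K → List α) :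
    {x : List α | RightBranching T x}.ncard ≤ (∑ k, (T k).length) - 1 := by
  classical
  calc {x : List α | RightBranching T x}.ncard
      ≤ (branchingPrefixes (nonemptySuffixes T)).ncard :=
        Set.ncard_le_ncard (setOf_rightBranching_subset T) (finite_branchingPrefixes _)
    _ ≤ (nonemptySuffixes T).card - 1 := ncard_branchingPrefixes_le _
    _ ≤ (∑ k, (T k).length) - 1 := Nat.sub_le_sub_right (card_nonemptySuffixes_le T) 1

/-- for a collection of total length `N ≥ 1`, the number of
distinct right-branching strings (the internal nodes of the generalized
suffix tree, possibly including the empty string) is at most `N - 1`. -/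
theorem card_rightBranching_le {α : Type*} {K : ℕ} (T : Fin K → List α)
    (hN : 1 ≤ ∑ k, (T k).length) :
    {x : List α | RightBranching T x}.ncard ≤ (∑ k, (T k).length) - 1 :=
  card_rightBranching_le_general T
end

section
/- (Case 1 of the DAWG update: when an edge labeled a already leaves the active point, all suffixes of the extended text are Type-3.) Let T' = (T_1, …, T_K) be a collection, a ∈ Σ, 1 ≤ k ≤ K, and let T be the collection obtained from T' by replacing T_k with T_k·[a]. If T_k·[a] is already a substring of T' (equivalently, Epos_{T'}(T_k·[a]) is nonempty), then |Epos_T(T_k·[a])| ≥ 2; consequently, every nonempty suffix of T_k·[a] occurs at least twice in T. -/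
lemma epos_finite {α : Type*} {K : ℕ} (T : Fin K → List α) (x : List α) :
    (Epos T x).Finite := by
  classical
  have : Epos T x ⊆ (Set.univ : Set (Fin K)) ×ˢ Set.Iic (Finset.univ.sup fun i => (T i).length) := by
    rintro ⟨i, j⟩ ⟨_, h2, _⟩
    exact ⟨trivial, le_trans h2 (Finset.le_sup (f := fun i => (T i).length) (Finset.mem_univ i))⟩
  exact Set.Finite.subset (Set.finite_univ.prod (Set.finite_Iic _)) this

lemma epos_suffix_subset {α : Type*} {K : ℕ} (T : Fin K → List α) {x s : List α}
    (hs : s <:+ x) : Epos T x ⊆ Epos T s := by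
  obtain ⟨w, hw⟩ := hs
  rintro ⟨i, j⟩ ⟨h1, h2, h3⟩
  have hlen : s.length ≤ x.length := by
    rw [← hw]; simp
  refine ⟨le_trans hlen h1, h2, ?_⟩
  have harith : j - s.length = (j - x.length) + (x.length - s.length) := by omega
  have hwl : x.length - s.length = w.length := by
    rw [← hw]; simp
  rw [harith, ← List.drop_drop, h3, hwl, ← hw, List.drop_left]

/-- Case 1 of the DAWG update: if `T_k·[a]` is already a
substring of `T'`, then after the update it occurs at least twice, and so does
every nonempty suffix of it. -/
theorem all_suffixes_type3 {α : Type*} {K : ℕ}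
    (T' : Fin K → List α) (a : α) (k : Fin K)
    (T : Fin K → List α) (hT : T = Function.update T' k (T' k ++ [a]))
    (hsub : IsSubstringOf T' (T' k ++ [a])) :
    2 ≤ (Epos T (T' k ++ [a])).ncard ∧
    ∀ s : List α, s ≠ [] → s <:+ T' k ++ [a] → 2 ≤ (Epos T s).ncard := by
  classical
  set x : List α := T' k ++ [a] with hx
  obtain ⟨k₀, u, v, huv⟩ := hsub
  -- every text of T' is a prefix of the corresponding text of T
  have hpre : ∀ i, T' i <+: T i := by
    intro i
    rw [hT]
    by_cases h : i = k
    · subst h; rw [Function.update_self]; exact ⟨[a], rfl⟩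
    · rw [Function.update_of_ne h]
  have p₁ : Fin K × ℕ := (k₀, u.length + x.length)
  -- first occurrence
  have hlen₀ : u.length + x.length ≤ (T' k₀).length := by
    rw [← huv]; simp
  have hmem₁ : (k₀, u.length + x.length) ∈ Epos T x := by
    have h4 : (T' k₀).take (u.length + x.length) = u ++ x := by
      conv_lhs => rw [← huv]
      rw [show u.length + x.length = (u ++ x).length from by simp, List.take_left]
    obtain ⟨t, ht⟩ := hpre k₀
    refine ⟨by omega, le_trans hlen₀ (hpre k₀).length_le, ?_⟩
    rw [← ht, List.take_append_of_le_length hlen₀, h4,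
      Nat.add_sub_cancel, List.drop_left]
  have hTk : T k = x := by rw [hT, Function.update_self]
  have hmem₂ : (k, x.length) ∈ Epos T x := by
    refine ⟨le_refl _, by rw [hTk], ?_⟩
    rw [hTk, Nat.sub_self, List.drop_zero, List.take_length]
  have hne : (k₀, u.length + x.length) ≠ ((k, x.length) : Fin K × ℕ) := by
    intro h
    have hk : k₀ = k := congrArg Prod.fst h
    have hu : u.length + x.length = x.length := congrArg Prod.snd h
    have hl := congrArg List.length huv
    rw [hk] at hl
    simp only [List.length_append] at hl
    have hxl : x.length = (T' k).length + 1 := by simp [hx]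
    omega
  have key : ∀ s : List α, s <:+ x → 2 ≤ (Epos T s).ncard := by
    intro s hs
    have h1 := epos_suffix_subset T hs hmem₁
    have h2 := epos_suffix_subset T hs hmem₂
    have : 1 < (Epos T s).ncard :=
      (Set.one_lt_ncard (epos_finite T s)).mpr ⟨_, h1, _, h2, hne⟩
    omega
  exact ⟨key x (List.suffix_refl x), fun s _ hs => key s hs⟩
end
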